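/- Consider the BayesGap algorithm on a K-armed linear-Gaussian bandit with K ≥ 2, horizon T > K, nonzero feature vectors x_1, …, x_K ∈ ℝ^d, noise standard deviation σ > 0, prior scale η > 0, and tolerance ε > 0. Let μ_k denote the true mean of arm k, μ* = max_k μ_k, Δ_k = |max_{i≠k} μ_i − μ_k|, H_{kε} = max(½(Δ_k + ε), ε), H_ε = Σ_k H_{kε}^{-2}, κ = Σ_k ‖x_k‖^{-2}, and β² = ((T−K)/σ² + κ/η²)/(4 H_ε). At each round t, given the arms a_1, …, a_{t−1} pulled so far, the posterior covariance is Σ̂_t = (σ^{-2} Σ_{n<t} x_{a_n} x_{a_n}ᵀ + η^{-2} I)⁻¹, the posterior standard deviation of arm k is σ̂_{kt} = √(x_kᵀ Σ̂_t x_k), and for arbitrary posterior means μ̂_{kt} ∈ ℝ the bounds are U_k(t) = μ̂_{kt} + β σ̂_{kt} and L_k(t) = μ̂_{kt} − β σ̂_{kt}; set s_k(t) = U_k(t) − L_k(t) and B_k(t) = max_{i≠k} U_i(t) − L_k(t). Suppose the arm selections follow the gap-based rule (J(t) minimizes B_·(t), j(t) ≠ J(t) maximizes U_·(t) among arms other than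 J(t), and a_t is the member of {j(t), J(t)} with the larger s), every arm is pulled at least once by time T, and the recommendation is Ω_T = J(τ) with τ = argmin_{t≤T} B_{J(t)}(t). If the bounds hold for all arms and rounds, i.e., L_k(t) ≤ μ_k ≤ U_k(t) for all k ≤ K and t ≤ T, then the simple regret satisfies R_{Ω_T} = μ* − μ_{Ω_T} ≤ ε. -/

import Mathlib

/-!
On the event that all bounds hold, the regret of `J(τ)` is at most `max (B_{J(τ)}(τ)) 0`, so it
suffices to find a round with `B_{J(t)}(t) ≤ ε`. Otherwise, in every round the gap rule gives
`B_J ≤ s_a` and `Δ_a + B_J ≤ 2 s_a` for the pulled arm `a`, hence `s_a > H_{aε}`. At the last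
pull of arm `k`, preceded by `N_k - 1` pulls of it, the posterior variance of arm `k` is at most
`‖x_k‖² / (σ⁻² (N_k - 1) ‖x_k‖² + η⁻²)`, so `σ⁻² (N_k - 1) + η⁻² / ‖x_k‖² < 4β² / H_{kε}²`.
Summing over the arms gives `(T - K)/σ² + κ/η² < 4β² H_ε`, contradicting the choice of `β`.
-/

open Finset Matrix

/-- With at least two arms, the set of all arms is nonempty. -/
lemma univNe {K : ℕ} (hK : 2 ≤ K) : (univ : Finset (Fin K)).Nonempty :=
  ⟨⟨0, by omega⟩, mem_univ _⟩

/-- With at least two arms, the set of arms other than `k` is nonempty. -/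
lemma eraseNe {K : ℕ} (hK : 2 ≤ K) (k : Fin K) :
    ((univ : Finset (Fin K)).erase k).Nonempty := by
  apply card_pos.mp
  rw [card_erase_of_mem (mem_univ k), card_univ, Fintype.card_fin]
  omega

/-- The maximum of `f` over arms other than `k`. -/
noncomputable def maxOther {K : ℕ} (hK : 2 ≤ K) (f : Fin K → ℝ) (k : Fin K) : ℝ :=
  ((univ : Finset (Fin K)).erase k).sup' (eraseNe hK k) f

/-- The gap index `B_k = max_{i ≠ k} U_i − L_k`. -/
noncomputable def gapB {K : ℕ} (hK : 2 ≤ K) (U L : Fin K → ℝ) (k : Fin K) : ℝ :=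
  maxOther hK U k - L k

-- With `c₁ = σ⁻²` and `c₂ = η⁻²` this is the posterior precision `Σ̂_t⁻¹`.
noncomputable def regGram {ι n : Type*} [Fintype n] [DecidableEq n] (c₁ c₂ : ℝ)
    (s : Finset ι) (w : ι → n → ℝ) : Matrix n n ℝ :=
  c₁ • ∑ i ∈ s, vecMulVec (w i) (w i) + c₂ • 1

section RegGram

variable {ι n : Type*} [Fintype n] [DecidableEq n] {c₁ c₂ : ℝ} {s : Finset ι} {w : ι → n → ℝ}

lemma dotProduct_regGram_mulVec (y : n → ℝ) :
    y ⬝ᵥ (regGram c₁ c₂ s w *ᵥ y) = c₁ * ∑ i ∈ s, (w i ⬝ᵥ y) ^ 2 + c₂ * (y ⬝ᵥ y) := by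
  simp only [regGram, add_mulVec, smul_mulVec, one_mulVec, sum_mulVec, vecMulVec_mulVec,
    dotProduct_add, dotProduct_smul, dotProduct_sum, smul_eq_mul]
  congr 2
  refine Finset.sum_congr rfl fun i _ => ?_
  simp only [op_smul_eq_smul, smul_eq_mul, dotProduct_comm y, sq]

lemma det_regGram_ne_zero (hc₁ : 0 ≤ c₁) (hc₂ : 0 < c₂) : (regGram c₁ c₂ s w).det ≠ 0 := by
  intro hdet
  obtain ⟨y, hy, hAy⟩ := exists_mulVec_eq_zero_iff.mpr hdet
  have hquad := dotProduct_regGram_mulVec (c₁ := c₁) (c₂ := c₂) (s := s) (w := w) y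
  rw [hAy, dotProduct_zero] at hquad
  have hyy : 0 < y ⬝ᵥ y := (dotProduct_self_star_nonneg y).lt_of_ne'
    (dotProduct_self_eq_zero.not.mpr hy)
  have hsum : 0 ≤ ∑ i ∈ s, (w i ⬝ᵥ y) ^ 2 := Finset.sum_nonneg fun _ _ => sq_nonneg _
  nlinarith [mul_nonneg hc₁ hsum, mul_pos hc₂ hyy]

/- With `y = A⁻¹ v` and `q = v ⬝ y = y ⬝ A y`, the quadratic form gives
`q ≥ c₁ #S q² + c₂ ‖y‖²`, and Cauchy–Schwarz `q² ≤ ‖v‖² ‖y‖²` eliminates `y`. -/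
lemma dotProduct_regGram_inv_mulVec_le (hc₁ : 0 ≤ c₁) (hc₂ : 0 < c₂) {S : Finset ι}
    (hS : S ⊆ s) {v : n → ℝ} (hw : ∀ i ∈ S, w i = v) :
    v ⬝ᵥ ((regGram c₁ c₂ s w)⁻¹ *ᵥ v) ≤ v ⬝ᵥ v / (c₁ * #S * (v ⬝ᵥ v) + c₂) := by
  set A := regGram c₁ c₂ s w
  set y := A⁻¹ *ᵥ v
  set q := v ⬝ᵥ y
  have hAy : A *ᵥ y = v := by
    rw [mulVec_mulVec, mul_nonsing_inv A (isUnit_iff_ne_zero.mpr (det_regGram_ne_zero hc₁ hc₂)),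
      one_mulVec]
  have hrepeat : #S * q ^ 2 ≤ ∑ i ∈ s, (w i ⬝ᵥ y) ^ 2 := calc
    #S * q ^ 2 = ∑ i ∈ S, (w i ⬝ᵥ y) ^ 2 := by
      rw [Finset.sum_congr rfl fun i hi => by rw [hw i hi], Finset.sum_const, nsmul_eq_mul]
    _ ≤ ∑ i ∈ s, (w i ⬝ᵥ y) ^ 2 :=
      Finset.sum_le_sum_of_subset_of_nonneg hS fun _ _ _ => sq_nonneg _
  have hquad : c₁ * (#S * q ^ 2) + c₂ * (y ⬝ᵥ y) ≤ q := by
    have h := dotProduct_regGram_mulVec (c₁ := c₁) (c₂ := c₂) (s := s) (w := w) y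
    rw [hAy, dotProduct_comm] at h
    nlinarith [mul_le_mul_of_nonneg_left hrepeat hc₁]
  have hCS : q ^ 2 ≤ (v ⬝ᵥ v) * (y ⬝ᵥ y) := by
    simpa only [q, dotProduct, sq] using sum_mul_sq_le_sq_mul_sq Finset.univ v y
  have hvv : 0 ≤ v ⬝ᵥ v := dotProduct_self_star_nonneg v
  have hyy : 0 ≤ y ⬝ᵥ y := dotProduct_self_star_nonneg y
  have hq : 0 ≤ q := by
    have := mul_nonneg hc₁ (mul_nonneg (Nat.cast_nonneg (α := ℝ) #S) (sq_nonneg q))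
    nlinarith [mul_nonneg hc₂.le hyy]
  have hden : 0 < c₁ * #S * (v ⬝ᵥ v) + c₂ := by positivity
  rw [le_div_iff₀ hden]
  rcases hq.eq_or_lt with hq0 | hqpos
  · rw [← hq0, zero_mul]
    exact hvv
  · refine le_of_mul_le_mul_right ?_ hqpos
    nlinarith [mul_le_mul_of_nonneg_left hCS hc₂.le, mul_le_mul_of_nonneg_left hquad hvv]

end RegGram

lemma two_mul_mul_sqrt_sq_mul_le {β v q c₁ c₂ m : ℝ} (hq : 0 < q) (hc₁ : 0 ≤ c₁) (hm : 0 ≤ m)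
    (hc₂ : 0 < c₂) (hv : v ≤ q / (c₁ * m * q + c₂)) :
    (2 * β * √v) ^ 2 * (c₁ * m + c₂ / q) ≤ 4 * β ^ 2 := by
  have hQ : 0 < c₁ * m * q + c₂ := by positivity
  have hprec : c₁ * m + c₂ / q = (c₁ * m * q + c₂) / q := by field_simp
  have hmax : max v 0 ≤ q / (c₁ * m * q + c₂) := max_le hv (by positivity)
  calc (2 * β * √v) ^ 2 * (c₁ * m + c₂ / q)
      = 4 * β ^ 2 * (max v 0 * ((c₁ * m * q + c₂) / q)) := by
        rw [mul_pow, Real.sq_sqrt', hprec]; ring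
    _ ≤ 4 * β ^ 2 * (q / (c₁ * m * q + c₂) * ((c₁ * m * q + c₂) / q)) := by gcongr
    _ = 4 * β ^ 2 := by field_simp

section GapRule

variable {K : ℕ} (hK : 2 ≤ K)

lemma le_maxOther (f : Fin K → ℝ) {i k : Fin K} (h : i ≠ k) : f i ≤ maxOther hK f k :=
  Finset.le_sup' f (Finset.mem_erase.mpr ⟨h, Finset.mem_univ i⟩)

lemma maxOther_le (f : Fin K → ℝ) {k : Fin K} {c : ℝ} (h : ∀ i ≠ k, f i ≤ c) :
    maxOther hK f k ≤ c :=
  Finset.sup'_le _ _ fun i hi => h i (Finset.mem_erase.mp hi).1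

noncomputable def armGap (μ : Fin K → ℝ) (k : Fin K) : ℝ := |maxOther hK μ k - μ k|

noncomputable def hardness (μ : Fin K → ℝ) (ε : ℝ) (k : Fin K) : ℝ :=
  max ((armGap hK μ k + ε) / 2) ε

variable {U L μ : Fin K → ℝ} {J j a : Fin K}

lemma sup'_sub_le_max_gapB (hE : ∀ k, L k ≤ μ k ∧ μ k ≤ U k) (J : Fin K) :
    univ.sup' (univNe hK) μ - μ J ≤ max (gapB hK U L J) 0 := by
  obtain ⟨k, -, hk⟩ := Finset.exists_mem_eq_sup' (univNe hK) μ
  rw [hk, gapB]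
  rcases eq_or_ne k J with rfl | hkJ
  · simp
  · linarith [(hE k).2, le_maxOther hK U hkJ, (hE J).1, le_max_left (maxOther hK U J - L J) 0]

lemma maxOther_eq_of_forall_le (hjJ : j ≠ J) (hU : ∀ i ≠ J, U i ≤ U j) :
    maxOther hK U J = U j :=
  le_antisymm (maxOther_le hK U hU) (le_maxOther hK U hjJ)

lemma le_max_of_forall_ne_le (hU : ∀ i ≠ J, U i ≤ U j) (i : Fin K) : U i ≤ max (U J) (U j) := by
  rcases eq_or_ne i J with rfl | hiJ
  exacts [le_max_left _ _, (hU i hiJ).trans (le_max_right _ _)]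

lemma gapB_le_max_diam (hJ : ∀ k, gapB hK U L J ≤ gapB hK U L k) (hjJ : j ≠ J)
    (hU : ∀ i ≠ J, U i ≤ U j) :
    gapB hK U L J ≤ max (U j - L j) (U J - L J) := by
  rcases le_or_gt (U j) (U J) with h | h
  · rw [gapB, maxOther_eq_of_forall_le hK hjJ hU]
    exact le_max_of_le_right (by linarith)
  · have hmax : maxOther hK U j ≤ U j := maxOther_le hK U fun i _ =>
      (le_max_of_forall_ne_le hU i).trans (max_le h.le le_rfl)
    calc gapB hK U L J ≤ gapB hK U L j := hJ j
      _ ≤ U j - L j := by rw [gapB]; linarith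
      _ ≤ _ := le_max_left _ _

lemma armGap_le (hE : ∀ k, L k ≤ μ k ∧ μ k ≤ U k) {b : Fin K} (hba : b ≠ a) :
    armGap hK μ a ≤ max (U a - L b) (maxOther hK U a - L a) := by
  have hup : maxOther hK μ a ≤ maxOther hK U a :=
    maxOther_le hK μ fun i hi => (hE i).2.trans (le_maxOther hK U hi)
  have hlow : μ b ≤ maxOther hK μ a := le_maxOther hK μ hba
  rw [armGap, abs_sub_le_iff]
  constructor
  · linarith [(hE a).1, le_max_right (U a - L b) (maxOther hK U a - L a)]
  · linarith [(hE a).2, (hE b).1, le_max_left (U a - L b) (maxOther hK U a - L a)]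

lemma armGap_add_gapB_le (hE : ∀ k, L k ≤ μ k ∧ μ k ≤ U k) (hjJ : j ≠ J)
    (hU : ∀ i ≠ J, U i ≤ U j) (ha : a = j ∨ a = J)
    (hB : gapB hK U L J ≤ max (U j - L j) (U J - L J)) :
    armGap hK μ a + gapB hK U L J ≤ 2 * max (U j - L j) (U J - L J) := by
  have hBJ : gapB hK U L J = U j - L J := by rw [gapB, maxOther_eq_of_forall_le hK hjJ hU]
  have hsj := le_max_left (U j - L j) (U J - L J)
  have hsJ := le_max_right (U j - L j) (U J - L J)
  rcases ha with rfl | rfl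
  · refine (add_le_add (armGap_le hK hE hjJ.symm) le_rfl).trans ?_
    rw [← max_add_add_right]
    refine max_le (by linarith) ?_
    have hmax : maxOther hK U a ≤ max (U J) (U a) :=
      maxOther_le hK U fun i _ => le_max_of_forall_ne_le hU i
    rcases le_total (U J) (U a) with h | h
    · rw [max_eq_right h] at hmax
      linarith
    · rw [max_eq_left h] at hmax
      linarith
  · refine (add_le_add (armGap_le hK hE hjJ) le_rfl).trans ?_
    rw [← max_add_add_right, maxOther_eq_of_forall_le hK hjJ hU]
    exact max_le (by linarith) (by linarith)

lemma hardness_lt_of_lt_gapB {ε : ℝ} (hE : ∀ k, L k ≤ μ k ∧ μ k ≤ U k)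
    (hJ : ∀ k, gapB hK U L J ≤ gapB hK U L k) (hjJ : j ≠ J) (hU : ∀ i ≠ J, U i ≤ U j)
    (ha : (a = j ∨ a = J) ∧ U a - L a = max (U j - L j) (U J - L J))
    (hε : ε < gapB hK U L J) :
    hardness hK μ ε a < U a - L a := by
  have hB := gapB_le_max_diam hK hJ hjJ hU
  have hsum := armGap_add_gapB_le hK hE hjJ hU ha.1 hB
  rw [ha.2, hardness]
  exact max_lt (by linarith) (by linarith)

end GapRule

lemma exists_card_filter_range_add_one_eq {α : Type*} [DecidableEq α] {a : ℕ → α} {k : α}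
    {T : ℕ} (h : ∃ t < T, a t = k) :
    ∃ t < T, a t = k ∧ #{n ∈ range t | a n = k} + 1 = #{n ∈ range T | a n = k} := by
  have hne : {n ∈ range T | a n = k}.Nonempty := by
    obtain ⟨t, ht, hat⟩ := h
    exact ⟨t, by simp [ht, hat]⟩
  set t := {n ∈ range T | a n = k}.max' hne
  have ht : t ∈ {n ∈ range T | a n = k} := max'_mem _ hne
  have hle : ∀ n ∈ {n ∈ range T | a n = k}, n ≤ t := fun n hn => le_max' _ n hn
  simp only [mem_filter, mem_range] at ht hle
  refine ⟨t, ht.1, ht.2, ?_⟩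
  rw [← card_erase_add_one (a := t) (s := {n ∈ range T | a n = k}) (by simpa using ht)]
  congr 2
  ext n
  simp only [mem_filter, mem_range, mem_erase]
  constructor
  · rintro ⟨hnt, hn⟩
    exact ⟨hnt.ne, hnt.trans ht.1, hn⟩
  · rintro ⟨hnt, hnT, hn⟩
    exact ⟨lt_of_le_of_ne (hle n ⟨hnT, hn⟩) hnt, hn⟩

lemma exists_gapB_le {K T : ℕ} (hK : 2 ≤ K) {U L : ℕ → Fin K → ℝ} {μ : Fin K → ℝ}
    {a J j : ℕ → Fin K} {c₁ c₂ β ε : ℝ} {q : Fin K → ℝ} (hε : 0 < ε) (hc₁ : 0 ≤ c₁)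
    (hc₂ : 0 < c₂) (hq : ∀ k, 0 < q k)
    (hE : ∀ t < T, ∀ k, L t k ≤ μ k ∧ μ k ≤ U t k)
    (hJ : ∀ t < T, ∀ k, gapB hK (U t) (L t) (J t) ≤ gapB hK (U t) (L t) k)
    (hj : ∀ t < T, j t ≠ J t ∧ ∀ i, i ≠ J t → U t i ≤ U t (j t))
    (ha : ∀ t < T, (a t = j t ∨ a t = J t) ∧
      U t (a t) - L t (a t) = max (U t (j t) - L t (j t)) (U t (J t) - L t (J t)))
    (hpull : ∀ k, ∃ t < T, a t = k)
    (hvar : ∀ t < T, ∀ k,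
      (U t k - L t k) ^ 2 * (c₁ * #{n ∈ range t | a n = k} + c₂ / q k) ≤ 4 * β ^ 2)
    (hbudget : 4 * β ^ 2 * ∑ k, 1 / hardness hK μ ε k ^ 2 ≤ c₁ * (T - K) + c₂ * ∑ k, 1 / q k) :
    ∃ t < T, gapB hK (U t) (L t) (J t) ≤ ε := by
  by_contra! hgap
  have hprec : ∀ k, c₁ * ((#{n ∈ range T | a n = k} : ℕ) - 1 : ℝ) + c₂ / q k
      < 4 * β ^ 2 * (1 / hardness hK μ ε k ^ 2) := by
    intro k
    obtain ⟨t, ht, rfl, hcard⟩ := exists_card_filter_range_add_one_eq (hpull k)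
    have hH := hardness_lt_of_lt_gapB hK (hE t ht) (hJ t ht) (hj t ht).1 (hj t ht).2 (ha t ht)
      (hgap t ht)
    have hHpos : 0 < hardness hK μ ε (a t) := hε.trans_le (le_max_right _ _)
    have hP : 0 < c₁ * #{n ∈ range t | a n = a t} + c₂ / q (a t) := by
      have := hq (a t)
      positivity
    rw [← hcard, Nat.cast_add_one, add_sub_cancel_right, mul_one_div,
      lt_div_iff₀ (pow_pos hHpos 2)]
    have hsq : hardness hK μ ε (a t) ^ 2 < (U t (a t) - L t (a t)) ^ 2 :=
      pow_lt_pow_left₀ hH hHpos.le two_ne_zero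
    nlinarith [hvar t ht (a t)]
  have hcount : ∑ k : Fin K, (#{n ∈ range T | a n = k} : ℝ) = T := by
    rw [← Nat.cast_sum, ← card_eq_sum_card_fiberwise fun n _ => mem_univ (a n), card_range]
  have hsum := Finset.sum_lt_sum_of_nonempty (univNe hK) fun k _ => hprec k
  rw [← Finset.mul_sum, Finset.sum_add_distrib, ← Finset.mul_sum, Finset.sum_sub_distrib,
    hcount] at hsum
  simp only [sum_const, card_univ, Fintype.card_fin, nsmul_eq_mul, mul_one, div_eq_mul_one_div c₂,
    ← Finset.mul_sum] at hsum
  linarith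

theorem bayesgap_simple_regret_general {d K T : ℕ} (hK : 2 ≤ K) (hKT : K < T)
    (x : Fin K → (Fin d → ℝ)) (hx : ∀ k, x k ≠ 0)
    (σ η ε : ℝ) (hη : 0 < η) (hε : 0 < ε)
    (μ : Fin K → ℝ) (μhat : ℕ → Fin K → ℝ)
    (a J j : ℕ → Fin K) (τ : ℕ) (hτ : τ < T) :
    let Δ : Fin K → ℝ := fun k => |maxOther hK μ k - μ k|
    let Hke : Fin K → ℝ := fun k => max ((Δ k + ε) / 2) ε
    let He : ℝ := ∑ k, 1 / (Hke k) ^ 2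
    let κ : ℝ := ∑ k, 1 / (x k ⬝ᵥ x k)
    let β : ℝ := Real.sqrt ((((T : ℝ) - K) / σ ^ 2 + κ / η ^ 2) / (4 * He))
    let Shat : ℕ → Matrix (Fin d) (Fin d) ℝ := fun t =>
      (σ ^ (-2 : ℤ) • ∑ n ∈ Finset.range t, vecMulVec (x (a n)) (x (a n)) +
        η ^ (-2 : ℤ) • (1 : Matrix (Fin d) (Fin d) ℝ))⁻¹
    let sdev : ℕ → Fin K → ℝ := fun t k => Real.sqrt (x k ⬝ᵥ (Shat t *ᵥ x k))
    let Ub : ℕ → Fin K → ℝ := fun t k => μhat t k + β * sdev t k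
    let Lb : ℕ → Fin K → ℝ := fun t k => μhat t k - β * sdev t k
    ∀ (hE : ∀ t < T, ∀ k, Lb t k ≤ μ k ∧ μ k ≤ Ub t k)
      (hJ : ∀ t < T, ∀ k,
        gapB hK (Ub t) (Lb t) (J t) ≤ gapB hK (Ub t) (Lb t) k)
      (hj : ∀ t < T, j t ≠ J t ∧ ∀ i, i ≠ J t → Ub t i ≤ Ub t (j t))
      (ha : ∀ t < T, (a t = j t ∨ a t = J t) ∧
        Ub t (a t) - Lb t (a t) =
          max (Ub t (j t) - Lb t (j t)) (Ub t (J t) - Lb t (J t)))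
      (hpull : ∀ k, ∃ t < T, a t = k)
      (hτmin : ∀ t < T,
        gapB hK (Ub τ) (Lb τ) (J τ) ≤ gapB hK (Ub t) (Lb t) (J t)),
    univ.sup' (univNe hK) μ - μ (J τ) ≤ ε := by
  intro Δ Hke He κ β Shat sdev Ub Lb hE hJ hj ha hpull hτmin
  have hq : ∀ k, 0 < x k ⬝ᵥ x k := fun k =>
    (dotProduct_self_star_nonneg _).lt_of_ne' (dotProduct_self_eq_zero.not.mpr (hx k))
  have hc₁ : 0 ≤ σ ^ (-2 : ℤ) := Even.zpow_nonneg (by decide) σ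
  have hc₂ : 0 < η ^ (-2 : ℤ) := zpow_pos hη _
  have hvar : ∀ t < T, ∀ k, (Ub t k - Lb t k) ^ 2 *
      (σ ^ (-2 : ℤ) * #{n ∈ range t | a n = k} + η ^ (-2 : ℤ) / (x k ⬝ᵥ x k)) ≤ 4 * β ^ 2 := by
    intro t _ k
    have hv := dotProduct_regGram_inv_mulVec_le (w := fun n => x (a n)) hc₁ hc₂
      (filter_subset (fun n => a n = k) (range t)) fun n hn => congrArg x (mem_filter.mp hn).2
    have hs : Ub t k - Lb t k = 2 * β * sdev t k := by simp only [Ub, Lb]; ring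
    rw [hs]
    exact two_mul_mul_sqrt_sq_mul_le (hq k) hc₁ (Nat.cast_nonneg _) hc₂ hv
  have hbudget : 4 * β ^ 2 * He ≤ σ ^ (-2 : ℤ) * (T - K) + η ^ (-2 : ℤ) * κ := by
    have hHe : 0 < He := Finset.sum_pos (fun k _ =>
      one_div_pos.mpr (pow_pos (hε.trans_le (le_max_right _ _)) 2)) (univNe hK)
    have hTK : (0 : ℝ) ≤ T - K := sub_nonneg.mpr (by exact_mod_cast hKT.le)
    have hκ : 0 ≤ κ := Finset.sum_nonneg fun k _ => (one_div_pos.mpr (hq k)).le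
    have hβ : 4 * β ^ 2 * He = (T - K) / σ ^ 2 + κ / η ^ 2 := by
      rw [Real.sq_sqrt (by positivity)]
      field_simp
    rw [hβ, _root_.zpow_neg, _root_.zpow_neg, zpow_ofNat, zpow_ofNat, div_eq_inv_mul,
      div_eq_inv_mul]
  obtain ⟨t, ht, hBt⟩ := exists_gapB_le hK hε hc₁ hc₂ hq hE hJ hj ha hpull hvar hbudget
  exact (sup'_sub_le_max_gapB hK (hE τ hτ) (J τ)).trans (max_le ((hτmin t ht).trans hBt) hε.le)

/-- Theorem 1 (deterministic content of the BayesGap simple-regret bound): on a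
`K`-armed linear-Gaussian bandit with horizon `T > K`, with exploration
constant `β² = ((T−K)/σ² + κ/η²)/(4H_ε)`, posterior covariance
`Σ̂_t = (σ⁻² Σ_{n<t} x_{a_n} x_{a_n}ᵀ + η⁻² I)⁻¹`, posterior standard
deviations `σ̂_{kt} = √(x_kᵀ Σ̂_t x_k)`, and bounds `U_k(t) = μ̂_{kt} + βσ̂_{kt}`,
`L_k(t) = μ̂_{kt} − βσ̂_{kt}`: if the arm selections follow the gap-based rule,
every arm is pulled at least once, and the bounds hold for all arms and rounds,
then the recommendation `Ω_T = J(τ)` (with `τ` minimizing `B_{J(t)}(t)`) has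
simple regret at most `ε`. Rounds are indexed `0, …, T−1`; `‖x_k‖² = x_k ⬝ᵥ x_k`
is the squared Euclidean norm. -/
theorem bayesgap_simple_regret {d K T : ℕ} (hK : 2 ≤ K) (hKT : K < T)
    (x : Fin K → (Fin d → ℝ)) (hx : ∀ k, x k ≠ 0)
    (σ η ε : ℝ) (hσ : 0 < σ) (hη : 0 < η) (hε : 0 < ε)
    (μ : Fin K → ℝ) (μhat : ℕ → Fin K → ℝ)
    (a J j : ℕ → Fin K) (τ : ℕ) (hτ : τ < T) :
    let Δ : Fin K → ℝ := fun k => |maxOther hK μ k - μ k|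
    let Hke : Fin K → ℝ := fun k => max ((Δ k + ε) / 2) ε
    let He : ℝ := ∑ k, 1 / (Hke k) ^ 2
    let κ : ℝ := ∑ k, 1 / (x k ⬝ᵥ x k)
    let β : ℝ := Real.sqrt ((((T : ℝ) - K) / σ ^ 2 + κ / η ^ 2) / (4 * He))
    let Shat : ℕ → Matrix (Fin d) (Fin d) ℝ := fun t =>
      (σ ^ (-2 : ℤ) • ∑ n ∈ Finset.range t, vecMulVec (x (a n)) (x (a n)) +
        η ^ (-2 : ℤ) • (1 : Matrix (Fin d) (Fin d) ℝ))⁻¹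
    let sdev : ℕ → Fin K → ℝ := fun t k => Real.sqrt (x k ⬝ᵥ (Shat t *ᵥ x k))
    let Ub : ℕ → Fin K → ℝ := fun t k => μhat t k + β * sdev t k
    let Lb : ℕ → Fin K → ℝ := fun t k => μhat t k - β * sdev t k
    ∀ (hE : ∀ t < T, ∀ k, Lb t k ≤ μ k ∧ μ k ≤ Ub t k)
      (hJ : ∀ t < T, ∀ k,
        gapB hK (Ub t) (Lb t) (J t) ≤ gapB hK (Ub t) (Lb t) k)
      (hj : ∀ t < T, j t ≠ J t ∧ ∀ i, i ≠ J t → Ub t i ≤ Ub t (j t))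
      (ha : ∀ t < T, (a t = j t ∨ a t = J t) ∧
        Ub t (a t) - Lb t (a t) =
          max (Ub t (j t) - Lb t (j t)) (Ub t (J t) - Lb t (J t)))
      (hpull : ∀ k, ∃ t < T, a t = k)
      (hτmin : ∀ t < T,
        gapB hK (Ub τ) (Lb τ) (J τ) ≤ gapB hK (Ub t) (Lb t) (J t)),
    univ.sup' (univNe hK) μ - μ (J τ) ≤ ε :=
  bayesgap_simple_regret_general hK hKT x hx σ η ε hη hε μ μhat a J j τ hτ
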